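/- For a prime p, the group PSL₂(𝔽_p) with p ≥ 5 is simple. -/

import Mathlib

open Matrix

namespace PSL2SimpleAux

variable {p : ℕ} [Fact p.Prime]

local notation "SL2" => Matrix.SpecialLinearGroup (Fin 2) (ZMod p)

/-- lower elementary matrix -/
def el (x : ZMod p) : SL2 := ⟨!![1,0;x,1], by simp [Matrix.det_fin_two_of]⟩
/-- upper elementary matrix -/
def eu (x : ZMod p) : SL2 := ⟨!![1,x;0,1], by simp [Matrix.det_fin_two_of]⟩
/-- rotation -/
def ww : SL2 := ⟨!![0,1;-1,0], by simp [Matrix.det_fin_two_of]⟩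

lemma el_coe (x : ZMod p) : (el x).1 = !![1,0;x,1] := rfl
lemma eu_coe (x : ZMod p) : (eu x).1 = !![1,x;0,1] := rfl
lemma ww_coe : (ww : SL2).1 = !![0,1;-1,0] := rfl

lemma el_mul (x y : ZMod p) : el x * el y = el (x+y) := by
  apply Subtype.ext
  show !![1,0;x,1] * !![1,0;y,1] = _
  rw [Matrix.mul_fin_two]; norm_num [el, add_comm]

lemma eu_mul (x y : ZMod p) : eu x * eu y = eu (x+y) := by
  apply Subtype.ext
  show !![1,x;0,1] * !![1,y;0,1] = _
  rw [Matrix.mul_fin_two]; norm_num [eu, add_comm]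

lemma el_zero : (el 0 : SL2) = 1 := by
  apply Subtype.ext; show !![1,0;(0:ZMod p),1] = 1
  ext i j; fin_cases i <;> fin_cases j <;> simp [Matrix.one_fin_two]

lemma eu_zero : (eu 0 : SL2) = 1 := by
  apply Subtype.ext; show !![1,(0:ZMod p);0,1] = 1
  ext i j; fin_cases i <;> fin_cases j <;> simp [Matrix.one_fin_two]

lemma el_inv (x : ZMod p) : (el x)⁻¹ = el (-x) := by
  apply inv_eq_of_mul_eq_one_right; rw [el_mul]; simp [el_zero]

lemma eu_inv (x : ZMod p) : (eu x)⁻¹ = eu (-x) := by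
  apply inv_eq_of_mul_eq_one_right; rw [eu_mul]; simp [eu_zero]

lemma ww_inv : (ww : SL2)⁻¹ = ⟨!![0,-1;1,0], by simp [Matrix.det_fin_two_of]⟩ := by
  apply inv_eq_of_mul_eq_one_right
  apply Subtype.ext
  show !![0,1;-1,0] * !![0,-1;1,0] = 1
  rw [Matrix.mul_fin_two, Matrix.one_fin_two]; norm_num

lemma el_pow (x : ZMod p) (n : ℕ) : (el x) ^ n = el ((n : ZMod p) * x) := by
  induction n with
  | zero => simp [el_zero]
  | succ n ih =>
    rw [pow_succ, ih, el_mul]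
    congr 1
    push_cast
    ring

/-- conjugating a lower elementary by `ww` gives an upper elementary -/
lemma ww_conj (x : ZMod p) : ww * el x * ww⁻¹ = eu (-x) := by
  rw [ww_inv]
  apply Subtype.ext
  show !![0,1;-1,0] * !![1,0;x,1] * !![0,-1;1,0] = !![1,-x;0,1]
  rw [Matrix.mul_fin_two, Matrix.mul_fin_two]; norm_num

/-- any SL2 element with nonzero lower-left entry is a product of three elementaries -/
lemma mem_of_lower_left_ne {H : Subgroup SL2}
    (hu : ∀ x, eu x ∈ H) (hl : ∀ x, el x ∈ H) (B : SL2) (hB : B.1 1 0 ≠ 0) : B ∈ H := by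
  induction B using Matrix.SpecialLinearGroup.fin_two_induction with
  | _ a b c d hdet =>
    replace hB : c ≠ 0 := by simpa using hB
    have key : eu ((a-1)/c) * el c * eu ((d-1)/c) =
        (⟨!![a, b; c, d], by rwa [det_fin_two_of]⟩ : SL2) := by
      apply Subtype.ext
      show !![1,(a-1)/c;0,1] * !![1,0;c,1] * !![1,(d-1)/c;0,1] = !![a,b;c,d]
      rw [Matrix.mul_fin_two, Matrix.mul_fin_two]
      ext i j
      fin_cases i <;> fin_cases j <;> simp <;> field_simp <;> ring_nf
      · linear_combination hdet
    rw [← key]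
    exact H.mul_mem (H.mul_mem (hu _) (hl _)) (hu _)

lemma eq_top_of_elementaries {H : Subgroup SL2}
    (hu : ∀ x, eu x ∈ H) (hl : ∀ x, el x ∈ H) : H = ⊤ := by
  rw [Subgroup.eq_top_iff']
  intro A
  by_cases hA : A.1 1 0 ≠ 0
  · exact mem_of_lower_left_ne hu hl A hA
  · push_neg at hA
    have hd : A.1 1 1 ≠ 0 := by
      intro h0
      have := A.2
      rw [det_fin_two, hA, h0] at this
      simp at this
    have h1 : (A * el 1).1 1 0 ≠ 0 := by
      have h0 : (A * el 1).1 = A.1 * !![1,0;1,1] := rfl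
      have h2 : (A.1 * (!![1,0;1,1] : Matrix (Fin 2) (Fin 2) (ZMod p))) 1 0
          = A.1 1 0 * 1 + A.1 1 1 * 1 := by
        simp [Matrix.mul_apply, Fin.sum_univ_two]
      rw [h0, h2, hA]; simpa using hd
    have hmem : A * el 1 ∈ H := mem_of_lower_left_ne hu hl _ h1
    have : A = (A * el 1) * (el 1)⁻¹ := by group
    rw [this]
    exact H.mul_mem hmem (H.inv_mem (hl 1))

/-- a subgroup containing one nontrivial lower elementary contains all of them -/
lemma el_all {N : Subgroup SL2} {z : ZMod p} (hz : z ≠ 0) (hmem : el z ∈ N)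
    (y : ZMod p) : el y ∈ N := by
  have : el z ^ ((y * z⁻¹).val) = el y := by
    rw [el_pow]
    have h : (((y * z⁻¹).val : ℕ) : ZMod p) = y * z⁻¹ := ZMod.natCast_rightInverse _
    rw [h]
    congr 1
    field_simp
  rw [← this]
  exact N.pow_mem hmem _

open Matrix.SpecialLinearGroup in
lemma coe3 (A B C : SL2) : (A * B * C).1 = A.1 * B.1 * C.1 := by
  simp [Matrix.SpecialLinearGroup.coe_mul]

lemma coe4 (A B C D : SL2) : (A * B * C * D).1 = A.1 * B.1 * C.1 * D.1 := by
  simp [Matrix.SpecialLinearGroup.coe_mul]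

lemma ww_inv_coe : ((ww : SL2)⁻¹).1 = !![0,-1;1,0] := by rw [ww_inv]

lemma el_inv_coe (x : ZMod p) : ((el x)⁻¹).1 = !![1,0;-x,1] := by rw [el_inv]; rfl

lemma eu_inv_coe (x : ZMod p) : ((eu x)⁻¹).1 = !![1,-x;0,1] := by rw [eu_inv]; rfl

lemma inv_coe (g : SL2) : (g⁻¹).1 = !![g.1 1 1, -g.1 0 1; -g.1 1 0, g.1 0 0] := by
  rw [Matrix.SpecialLinearGroup.SL2_inv_expl]
  rfl

lemma cast_ne_zero (hp : 5 ≤ p) (k : ℕ) (hk : 0 < k) (hk6 : k ≤ 6) (hk5 : k ≠ 5) :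
    (k : ZMod p) ≠ 0 := by
  intro h
  rw [ZMod.natCast_eq_zero_iff] at h
  have h1 : p ≤ 6 := le_trans (Nat.le_of_dvd hk h) hk6
  have := (Fact.out : p.Prime)
  interval_cases p
  · omega
  · norm_num at this

lemma rep (g : SL2) : ∃ a b c d : ZMod p,
    a*d - b*c = 1 ∧ g.1 = !![a,b;c,d] := by
  refine ⟨g.1 0 0, g.1 0 1, g.1 1 0, g.1 1 1, ?_, ?_⟩
  · have := g.2
    rwa [det_fin_two] at this
  · exact (Matrix.eta_fin_two g.1)

/-- Step 1 -/
lemma step1 (N : Subgroup SL2) (hN : N.Normal) {g : SL2} (hg : g ∈ N)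
    (hns : ¬(g.1 1 0 = 0 ∧ g.1 0 1 = 0 ∧ g.1 0 0 = g.1 1 1)) :
    ∃ h : SL2, h ∈ N ∧ h.1 1 0 ≠ 0 ∧ h.1 0 0 + h.1 1 1 = g.1 0 0 + g.1 1 1 := by
  obtain ⟨a, b, c, d, hdet, hrep⟩ := rep g
  have ea : g.1 0 0 = a := by rw [hrep]; rfl
  have eb : g.1 0 1 = b := by rw [hrep]; rfl
  have ec : g.1 1 0 = c := by rw [hrep]; rfl
  have ed : g.1 1 1 = d := by rw [hrep]; rfl
  by_cases hc : c ≠ 0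
  · exact ⟨g, hg, by rw [ec]; exact hc, rfl⟩
  push_neg at hc
  by_cases hb : b ≠ 0
  · have key : (ww * g * ww⁻¹).1 = !![d,-c;-b,a] := by
      rw [coe3, hrep, ww_inv_coe, ww_coe, Matrix.mul_fin_two, Matrix.mul_fin_two]
      ext i j
      fin_cases i <;> fin_cases j <;> simp <;> ring
    refine ⟨ww * g * ww⁻¹, hN.conj_mem _ hg ww, ?_, ?_⟩
    · rw [key]; simpa using hb
    · rw [key, ea, ed]; show d + a = a + d; ring
  · push_neg at hb
    have had : a ≠ d := by
      intro h
      exact hns ⟨by rw [ec, hc], by rw [eb, hb], by rw [ea, ed, h]⟩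
    have key : (el 1 * g * (el 1)⁻¹).1 = !![a - b, b; a - b + c - d, b + d] := by
      rw [coe3, hrep, el_inv_coe, el_coe, Matrix.mul_fin_two, Matrix.mul_fin_two]
      ext i j
      fin_cases i <;> fin_cases j <;> simp <;> ring
    refine ⟨el 1 * g * (el 1)⁻¹, hN.conj_mem _ hg (el 1), ?_, ?_⟩
    · rw [key]
      show a - b + c - d ≠ 0
      rw [hb, hc]
      simpa [sub_eq_zero] using had
    · rw [key, ea, ed]
      show (a - b) + (b + d) = a + d
      ring

/-- Step 2 -/
lemma step2 (N : Subgroup SL2) (hN : N.Normal) {g : SL2} (hg : g ∈ N)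
    (hc : g.1 1 0 ≠ 0) :
    ∃ h : SL2, h ∈ N ∧ h.1 = !![0, -(g.1 1 0)⁻¹; g.1 1 0, g.1 0 0 + g.1 1 1] := by
  obtain ⟨a, b, c, d, hdet, hrep⟩ := rep g
  have ea : g.1 0 0 = a := by rw [hrep]; rfl
  have ec : g.1 1 0 = c := by rw [hrep]; rfl
  have ed : g.1 1 1 = d := by rw [hrep]; rfl
  rw [ec] at hc ⊢
  rw [ea, ed]
  refine ⟨eu (-a/c) * g * (eu (-a/c))⁻¹, hN.conj_mem _ hg _, ?_⟩
  rw [coe3, hrep, eu_inv_coe, eu_coe, Matrix.mul_fin_two, Matrix.mul_fin_two]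
  ext i j
  fin_cases i <;> fin_cases j <;> simp <;> field_simp <;> ring_nf
  linear_combination -hdet

/-- commutator trick for lower-triangular elements -/
lemma key1 (N : Subgroup SL2) (hN : N.Normal) (hneg : (-1 : SL2) ∈ N)
    {M : SL2} (hMm : M ∈ N) {e f : ZMod p} (he : e ≠ 0)
    (hM : M.1 = !![e,0;f,e⁻¹]) (hef : f ≠ 0 ∨ e^2 ≠ 1) :
    ∃ z : ZMod p, z ≠ 0 ∧ el z ∈ N := by
  by_cases he2 : e^2 = 1
  · have hf : f ≠ 0 := hef.resolve_right (fun h => h he2)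
    have h0 : (e-1)*(e+1) = 0 := by linear_combination he2
    rcases mul_eq_zero.mp h0 with h | h
    · have he1 : e = 1 := by linear_combination h
      refine ⟨f, hf, ?_⟩
      have : el f = M := by
        apply Subtype.ext
        rw [el_coe, hM, he1, inv_one]
      rwa [this]
    · have he1 : e = -1 := by linear_combination h
      refine ⟨-f, neg_ne_zero.mpr hf, ?_⟩
      have : el (-f) = (-1) * M := by
        apply Subtype.ext
        rw [el_coe, Matrix.SpecialLinearGroup.coe_mul, hM, he1]
        norm_num
      rw [this]
      exact N.mul_mem hneg hMm
  · refine ⟨e⁻¹ * e⁻¹ - 1, ?_, ?_⟩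
    · rw [sub_ne_zero]
      intro h
      apply he2
      have : e^2 * (e⁻¹ * e⁻¹) = e^2 * 1 := by rw [h]
      field_simp at this
      linear_combination -this
    · have hMinv : (M⁻¹).1 = !![e⁻¹, 0; -f, e] := by
        rw [inv_coe, hM]
        norm_num
      have hmem : M * (el 1 * M⁻¹ * (el 1)⁻¹) ∈ N :=
        N.mul_mem hMm (hN.conj_mem _ (N.inv_mem hMm) (el 1))
      have heq : M * (el 1 * M⁻¹ * (el 1)⁻¹) = el (e⁻¹ * e⁻¹ - 1) := by
        apply Subtype.ext
        simp only [Matrix.SpecialLinearGroup.coe_mul, coe3, hM, hMinv, el_coe, el_inv_coe,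
          Matrix.mul_fin_two]
        ext i j
        fin_cases i <;> fin_cases j <;> simp <;> field_simp <;> ring
      rwa [heq] at hmem

/-- the case of an antidiagonal-ish element with nonzero trace -/
lemma keyAnti (hp : 5 ≤ p) (N : Subgroup SL2) (hN : N.Normal) (hneg : (-1 : SL2) ∈ N)
    {c t : ZMod p} (hc : c ≠ 0) (ht : t ≠ 0) {g : SL2} (hg : g ∈ N)
    (hrep : g.1 = !![0,-c⁻¹;c,t]) :
    ∃ z : ZMod p, z ≠ 0 ∧ el z ∈ N := by
  have h2ne : (2 : ZMod p) ≠ 0 := by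
    have := cast_ne_zero (p := p) hp 2 (by norm_num) (by norm_num) (by norm_num)
    simpa using this
  have h3ne : (3 : ZMod p) ≠ 0 := by
    have := cast_ne_zero (p := p) hp 3 (by norm_num) (by norm_num) (by norm_num)
    simpa using this
  have h4ne : (4 : ZMod p) ≠ 0 := by
    have := cast_ne_zero (p := p) hp 4 (by norm_num) (by norm_num) (by norm_num)
    simpa using this
  set h2 : SL2 := ⟨!![2,0;0,2⁻¹], by rw [det_fin_two_of]; field_simp; norm_num⟩ with hh2
  have h2inv : (h2⁻¹).1 = !![2⁻¹,0;0,2] := by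
    rw [inv_coe]
    show !![(2:ZMod p)⁻¹, -0; -0, 2] = _
    norm_num
  have hginv : (g⁻¹).1 = !![t, c⁻¹; -c, 0] := by
    rw [inv_coe, hrep]
    norm_num
  have hmem : (h2 * g * h2⁻¹) * g⁻¹ ∈ N := N.mul_mem (hN.conj_mem _ hg h2) (N.inv_mem hg)
  have h4inv : ((4:ZMod p))⁻¹ - 1 ≠ 0 := by
    rw [sub_ne_zero]
    intro h
    have h41 : (4 : ZMod p) = 1 := by rw [← inv_inv (4 : ZMod p), h, inv_one]
    have : (3 : ZMod p) = 0 := by linear_combination h41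
    exact h3ne this
  have hMrep : ((h2 * g * h2⁻¹) * g⁻¹).1 = !![(4:ZMod p), 0; c*t*((4:ZMod p)⁻¹ - 1), (4:ZMod p)⁻¹] := by
    rw [Matrix.SpecialLinearGroup.coe_mul, coe3, hrep, hginv, h2inv, hh2]
    show !![(2:ZMod p),0;0,2⁻¹] * _ * _ * _ = _
    rw [Matrix.mul_fin_two, Matrix.mul_fin_two, Matrix.mul_fin_two]
    ext i j
    fin_cases i <;> fin_cases j <;> simp <;> field_simp <;> ring
  exact key1 N hN hneg hmem h4ne hMrep (Or.inl (by
    exact mul_ne_zero (mul_ne_zero hc ht) h4inv))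

/-- nonzero trace, non-scalar: produce a transvection -/
lemma keyA (hp : 5 ≤ p) (N : Subgroup SL2) (hN : N.Normal) (hneg : (-1 : SL2) ∈ N)
    {g : SL2} (hg : g ∈ N)
    (hns : ¬(g.1 1 0 = 0 ∧ g.1 0 1 = 0 ∧ g.1 0 0 = g.1 1 1))
    (ht : g.1 0 0 + g.1 1 1 ≠ 0) :
    ∃ z : ZMod p, z ≠ 0 ∧ el z ∈ N := by
  obtain ⟨h, hhN, hc, htr⟩ := step1 N hN hg hns
  obtain ⟨h', hh'N, hrep⟩ := step2 N hN hhN hc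
  rw [htr] at hrep
  exact keyAnti hp N hN hneg hc ht hh'N hrep

/-- trace-zero antidiagonal case -/
lemma keyT0 (hp : 5 ≤ p) (N : Subgroup SL2) (hN : N.Normal) (hneg : (-1 : SL2) ∈ N)
    {g : SL2} (hg : g ∈ N) {c : ZMod p} (hc : c ≠ 0)
    (hrep : g.1 = !![0,-c⁻¹;c,0]) :
    ∃ z : ZMod p, z ≠ 0 ∧ el z ∈ N := by
  have h2ne : (2 : ZMod p) ≠ 0 := by
    have := cast_ne_zero (p := p) hp 2 (by norm_num) (by norm_num) (by norm_num)
    simpa using this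
  have h6ne : (6 : ZMod p) ≠ 0 := by
    have := cast_ne_zero (p := p) hp 6 (by norm_num) (by norm_num) (by norm_num)
    simpa using this
  -- choose x with x ≠ 0 and 2 + c^2 x^2 ≠ 0
  obtain ⟨x, hx0, hxt⟩ : ∃ x : ZMod p, x ≠ 0 ∧ 2 + c^2*x^2 ≠ 0 := by
    by_cases hc2 : c^2 = -2
    · refine ⟨2, h2ne, ?_⟩
      rw [hc2]
      intro h
      apply h6ne
      linear_combination -h
    · refine ⟨1, one_ne_zero, ?_⟩
      intro h
      apply hc2
      linear_combination h
  have hginv : (g⁻¹).1 = !![0, c⁻¹; -c, 0] := by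
    rw [inv_coe, hrep]
    norm_num
  have hmem : (g * eu x * g⁻¹) * (eu x)⁻¹ ∈ N := by
    have h1 : g * ((eu x) * g⁻¹ * (eu x)⁻¹) ∈ N :=
      N.mul_mem hg (hN.conj_mem _ (N.inv_mem hg) (eu x))
    have : g * ((eu x) * g⁻¹ * (eu x)⁻¹) = (g * eu x * g⁻¹) * (eu x)⁻¹ := by group
    rwa [this] at h1
  have hK : ((g * eu x * g⁻¹) * (eu x)⁻¹).1 = !![1, -x; -(c^2*x), c^2*x^2+1] := by
    simp only [Matrix.SpecialLinearGroup.coe_mul, hrep, hginv, eu_coe, eu_inv_coe,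
      Matrix.mul_fin_two]
    ext i j
    fin_cases i <;> fin_cases j <;> simp <;> field_simp <;> ring
  apply keyA hp N hN hneg hmem
  · intro ⟨h1, h2, h3⟩
    rw [hK] at h2
    apply hx0
    have hx : -x = 0 := h2
    linear_combination -hx
  · rw [hK]
    show (1 : ZMod p) + (c^2*x^2+1) ≠ 0
    intro h
    apply hxt
    linear_combination h

lemma neg_one_mem_center : (-1 : SL2) ∈ Subgroup.center (Matrix.SpecialLinearGroup (Fin 2) (ZMod p)) := by
  rw [Matrix.SpecialLinearGroup.mem_center_iff]
  refine ⟨-1, by norm_num, ?_⟩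
  have : (-1 : Matrix (Fin 2) (Fin 2) (ZMod p)) = ((-1 : SL2) : Matrix (Fin 2) (Fin 2) (ZMod p)) := by
    simp [Matrix.SpecialLinearGroup.coe_neg]
  rw [← this]
  rw [show (scalar (Fin 2)) (-1 : ZMod p) = diagonal (fun _ : Fin 2 => (-1:ZMod p)) from rfl]
  ext i j
  fin_cases i <;> fin_cases j <;> simp [Matrix.diagonal]

lemma mem_center_of_diag {g : SL2} (h1 : g.1 1 0 = 0) (h2 : g.1 0 1 = 0)
    (h3 : g.1 0 0 = g.1 1 1) :
    g ∈ Subgroup.center (Matrix.SpecialLinearGroup (Fin 2) (ZMod p)) := by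
  rw [Matrix.SpecialLinearGroup.mem_center_iff]
  refine ⟨g.1 0 0, ?_, ?_⟩
  · have hdet := g.2
    rw [det_fin_two] at hdet
    rw [Fintype.card_fin, sq]
    linear_combination hdet + g.1 0 0 * h3 + g.1 1 0 * h2
  · ext i j
    rw [Matrix.scalar_apply]
    fin_cases i <;> fin_cases j <;>
      simp [Matrix.diagonal, h1, h2]
    exact h3

/-- Main engine: a normal subgroup of `SL(2, ZMod p)` containing the center and a
non-central element is everything. -/
lemma normal_top (hp : 5 ≤ p) (N : Subgroup SL2) (hN : N.Normal)
    (hZ : Subgroup.center (Matrix.SpecialLinearGroup (Fin 2) (ZMod p)) ≤ N)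
    {g : SL2} (hg : g ∈ N)
    (hgc : g ∉ Subgroup.center (Matrix.SpecialLinearGroup (Fin 2) (ZMod p))) : N = ⊤ := by
  have hneg : (-1 : SL2) ∈ N := hZ neg_one_mem_center
  have hns : ¬(g.1 1 0 = 0 ∧ g.1 0 1 = 0 ∧ g.1 0 0 = g.1 1 1) := by
    intro ⟨h1, h2, h3⟩
    exact hgc (mem_center_of_diag h1 h2 h3)
  have hz : ∃ z : ZMod p, z ≠ 0 ∧ el z ∈ N := by
    by_cases ht : g.1 0 0 + g.1 1 1 ≠ 0
    · exact keyA hp N hN hneg hg hns ht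
    · push_neg at ht
      obtain ⟨h, hhN, hc, htr⟩ := step1 N hN hg hns
      obtain ⟨h', hh'N, hrep⟩ := step2 N hN hhN hc
      rw [htr, ht] at hrep
      exact keyT0 hp N hN hneg hh'N hc hrep
  obtain ⟨z, hz0, hzN⟩ := hz
  have hel : ∀ y, el y ∈ N := el_all hz0 hzN
  have heu : ∀ y, eu y ∈ N := by
    intro y
    have := hN.conj_mem _ (hel (-y)) ww
    rwa [ww_conj, neg_neg] at this
  exact eq_top_of_elementaries heu hel

end PSL2SimpleAux

open PSL2SimpleAux in
/-- For a prime `p ≥ 5`, the group `PSL₂(𝔽_p)` is simple. -/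
theorem psl2_simple (p : ℕ) [Fact p.Prime] (hp : 5 ≤ p) :
    IsSimpleGroup (Matrix.ProjectiveSpecialLinearGroup (Fin 2) (ZMod p)) := by
  set Z := Subgroup.center (Matrix.SpecialLinearGroup (Fin 2) (ZMod p)) with hZdef
  have hone : (1 : ZMod p) ≠ 0 := one_ne_zero
  have hnt : Nontrivial (Matrix.ProjectiveSpecialLinearGroup (Fin 2) (ZMod p)) := by
    refine ⟨QuotientGroup.mk' Z (eu 1), 1, ?_⟩
    rw [Ne, QuotientGroup.mk'_apply, QuotientGroup.eq_one_iff]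
    intro hmem
    obtain ⟨r, -, hr⟩ := Matrix.SpecialLinearGroup.mem_center_iff.mp hmem
    have := congrFun (congrFun hr 0) 1
    rw [Matrix.scalar_apply] at this
    simp [Matrix.diagonal, eu_coe] at this
  refine { toNontrivial := hnt, eq_bot_or_eq_top_of_normal := ?_ }
  intro N hn
  by_cases hbot : N = ⊥
  · exact Or.inl hbot
  right
  obtain ⟨x, hxN, hx1⟩ := (Subgroup.bot_or_exists_ne_one N).resolve_left hbot
  obtain ⟨g, rfl⟩ := QuotientGroup.mk'_surjective Z x
  have hgN : g ∈ N.comap (QuotientGroup.mk' Z) := hxN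
  have hgc : g ∉ Z := by
    intro h
    apply hx1
    rw [QuotientGroup.mk'_apply, QuotientGroup.eq_one_iff]
    exact h
  have hZle : Z ≤ N.comap (QuotientGroup.mk' Z) := by
    intro z hz
    show QuotientGroup.mk' Z z ∈ N
    have : QuotientGroup.mk' Z z = 1 := by
      rw [QuotientGroup.mk'_apply, QuotientGroup.eq_one_iff]
      exact hz
    rw [this]
    exact N.one_mem
  have htop := normal_top hp _ (Subgroup.Normal.comap hn _) hZle hgN hgc
  have hmc := Subgroup.map_comap_eq_self_of_surjective
    (QuotientGroup.mk'_surjective Z) N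
  rw [← hmc, htop]
  exact Subgroup.map_top_of_surjective _ (QuotientGroup.mk'_surjective Z)
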